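/- arXiv:1207.4273 — 2 statements merged into one kernel-verified Lean document; each statement's English description precedes it below -/
import Mathlib

section
/- Let $n : [0,\infty) \to [0,\infty)$ be nondecreasing, $A > 0$, $0 < \delta < d$. Define $N(r) := \int_0^r \frac{n(t) - n(0)}{t}\,dt$. If $N(r) = \frac{A r^d}{d} + O(r^{d-\delta})$ as $r \to \infty$, then $n(r) = A r^d + O(r^{d - \delta/2})$ as $r \to \infty$. -/
/-!
Write `m(t) = n(t) - n(0)`, which is nondecreasing and nonnegative. Averaging `m(t)/t` over a
window `[r, r + α]` (resp. `[r - α, r]`) bounds `m(r)` above (resp. below) by `(r ± α)/α` times an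
increment of `N`, and by hypothesis that increment is `A((r ± α)^d - r^d)/d` up to `O(r^(d-δ))`.
The resulting error is of order `r^(d-1) α + r^(d-δ) r/α`, and `α = r^(1-δ/2)` balances the two
terms at `r^(d-δ/2)`.
-/

open MeasureTheory Set Filter

section RpowIncrement

variable {d s t : ℝ}

lemma rpow_sub_rpow_le_mul (hd : 1 ≤ d) (ht : 0 ≤ t) (hts : t ≤ s) :
    s ^ d - t ^ d ≤ d * s ^ (d - 1) * (s - t) := by
  rcases hts.eq_or_lt with rfl | hts
  · simp
  have h := (convexOn_rpow hd).slope_le_of_hasDerivAt ht (ht.trans hts.le) hts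
    (Real.hasDerivAt_rpow_const (Or.inr hd))
  rwa [slope_def_field, div_le_iff₀ (sub_pos.2 hts)] at h

lemma mul_le_rpow_sub_rpow (hd : 1 ≤ d) (ht : 0 ≤ t) (hts : t ≤ s) :
    d * t ^ (d - 1) * (s - t) ≤ s ^ d - t ^ d := by
  rcases hts.eq_or_lt with rfl | hts
  · simp
  have h := (convexOn_rpow hd).le_slope_of_hasDerivAt ht (ht.trans hts.le) hts
    (Real.hasDerivAt_rpow_const (Or.inr hd))
  rwa [slope_def_field, le_div_iff₀ (sub_pos.2 hts)] at h

end RpowIncrement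

section MonotoneIntegral

variable {m : ℝ → ℝ} {a b : ℝ}

lemma MonotoneOn.intervalIntegrable_div (hm : MonotoneOn m (Icc a b)) (ha : 0 < a) (hab : a ≤ b) :
    IntervalIntegrable (fun t => m t / t) volume a b := by
  simp_rw [div_eq_mul_inv]
  rw [← uIcc_of_le hab] at hm
  refine hm.intervalIntegrable.mul_continuousOn (continuousOn_inv₀.mono fun t ht => ?_)
  exact (ha.trans_le (uIcc_of_le hab ▸ ht).1).ne'

lemma MonotoneOn.mul_sub_div_le_integral_div (hm : MonotoneOn m (Icc a b)) (ha : 0 < a)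
    (hab : a ≤ b) (hma : 0 ≤ m a) :
    m a * ((b - a) / b) ≤ ∫ t in a..b, m t / t := by
  have hle : ∀ t ∈ Icc a b, m a / b ≤ m t / t := fun t ht =>
    div_le_div₀ (hma.trans (hm ⟨le_rfl, hab⟩ ht ht.1)) (hm ⟨le_rfl, hab⟩ ht ht.1)
      (ha.trans_le ht.1) ht.2
  calc m a * ((b - a) / b) = ∫ _ in a..b, m a / b := by
        rw [intervalIntegral.integral_const, smul_eq_mul]; ring
    _ ≤ ∫ t in a..b, m t / t :=
      intervalIntegral.integral_mono_on hab intervalIntegrable_const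
        (hm.intervalIntegrable_div ha hab) hle

lemma MonotoneOn.integral_div_le_mul_sub_div (hm : MonotoneOn m (Icc a b)) (ha : 0 < a)
    (hab : a ≤ b) (hmb : 0 ≤ m b) :
    ∫ t in a..b, m t / t ≤ m b * ((b - a) / a) := by
  have hle : ∀ t ∈ Icc a b, m t / t ≤ m b / a := fun t ht =>
    div_le_div₀ hmb (hm ht ⟨hab, le_rfl⟩ ht.2) ha ht.1
  calc ∫ t in a..b, m t / t ≤ ∫ _ in a..b, m b / a :=
      intervalIntegral.integral_mono_on hab (hm.intervalIntegrable_div ha hab)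
        intervalIntegrable_const hle
    _ = m b * ((b - a) / a) := by rw [intervalIntegral.integral_const, smul_eq_mul]; ring

end MonotoneIntegral

lemma rpow_le_two_rpow_mul_rpow {x r p q : ℝ} (hx : 0 ≤ x) (hxr : x ≤ 2 * r) (hp : 0 ≤ p)
    (hpq : p ≤ q) : x ^ p ≤ 2 ^ q * r ^ p := by
  have hr : 0 ≤ r := by linarith
  calc x ^ p ≤ (2 * r) ^ p := by gcongr
    _ = 2 ^ p * r ^ p := Real.mul_rpow zero_le_two hr
    _ ≤ 2 ^ q * r ^ p := by gcongr; norm_num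

lemma isBigO_const_rpow_atTop (c : ℝ) {p : ℝ} (hp : 0 ≤ p) :
    (fun _ : ℝ => c) =O[atTop] fun x => x ^ p := by
  refine Asymptotics.IsBigO.of_bound |c| ?_
  filter_upwards [eventually_ge_atTop 1] with x hx
  rw [Real.norm_eq_abs, Real.norm_of_nonneg (by positivity)]
  exact le_mul_of_one_le_right (abs_nonneg c) (Real.one_le_rpow hx hp)

section IntegratedCounting

variable {m : ℝ → ℝ} {A d δ C R₀ r s t α : ℝ}

lemma abs_integral_div_sub_le
    (hint : ∀ r, IntervalIntegrable (fun x => m x / x) volume 0 r)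
    (hN : ∀ r, R₀ ≤ r → |(∫ x in (0:ℝ)..r, m x / x) - A * r ^ d / d| ≤ C * r ^ (d - δ))
    (hC : 0 ≤ C) (hδd : δ ≤ d) (ht₀ : 0 ≤ t) (htR : R₀ ≤ t) (hts : t ≤ s) :
    |(∫ x in t..s, m x / x) - A * (s ^ d - t ^ d) / d| ≤ 2 * C * s ^ (d - δ) := by
  have hpow : C * t ^ (d - δ) ≤ C * s ^ (d - δ) := by gcongr
  rw [← intervalIntegral.integral_interval_sub_left (hint s) (hint t)]
  calc _ = |((∫ x in (0:ℝ)..s, m x / x) - A * s ^ d / d) -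
        ((∫ x in (0:ℝ)..t, m x / x) - A * t ^ d / d)| := by ring_nf
    _ ≤ _ := abs_sub _ _
    _ ≤ C * s ^ (d - δ) + C * t ^ (d - δ) := add_le_add (hN s (htR.trans hts)) (hN t htR)
    _ ≤ 2 * C * s ^ (d - δ) := by linarith

lemma sub_rpow_le_of_integral
    (hint : ∀ r, IntervalIntegrable (fun x => m x / x) volume 0 r)
    (hN : ∀ r, R₀ ≤ r → |(∫ x in (0:ℝ)..r, m x / x) - A * r ^ d / d| ≤ C * r ^ (d - δ))
    (hm : MonotoneOn m (Icc r s)) (hmr : 0 ≤ m r) (hA : 0 ≤ A) (hC : 0 ≤ C) (hd : 1 ≤ d)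
    (hδd : δ ≤ d) (hr : 0 < r) (hrR : R₀ ≤ r) (hrs : r < s) :
    m r - A * r ^ d ≤ A * d * s ^ (d - 1) * (s - r) + 2 * C * s ^ (d - δ) * (s / (s - r)) := by
  have hs : 0 < s := hr.trans hrs
  have hsr : 0 < s - r := sub_pos.2 hrs
  have hinc := mul_le_mul_of_nonneg_left (rpow_sub_rpow_le_mul hd hr.le hrs.le) hA
  have hss : s ^ (d - 1) * s = s ^ d := by
    rw [Real.rpow_sub_one hs.ne']
    field_simp
  have hwindow : m r * ((s - r) / s) ≤ A * s ^ (d - 1) * (s - r) + 2 * C * s ^ (d - δ) := by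
    have hmean : A * (s ^ d - r ^ d) / d ≤ A * s ^ (d - 1) * (s - r) := by
      rw [div_le_iff₀ (by linarith)]
      linarith
    linarith [hm.mul_sub_div_le_integral_div hr hrs.le hmr,
      (abs_le.1 (abs_integral_div_sub_le hint hN hC hδd hr.le hrR hrs.le)).2]
  have hmr_le : m r ≤ A * s ^ d + 2 * C * s ^ (d - δ) * (s / (s - r)) :=
    calc m r = m r * ((s - r) / s) * (s / (s - r)) := by field_simp
      _ ≤ (A * s ^ (d - 1) * (s - r) + 2 * C * s ^ (d - δ)) * (s / (s - r)) := by gcongr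
      _ = A * (s ^ (d - 1) * s) + 2 * C * s ^ (d - δ) * (s / (s - r)) := by field_simp
      _ = A * s ^ d + 2 * C * s ^ (d - δ) * (s / (s - r)) := by rw [hss]
  linarith

lemma rpow_sub_le_of_integral
    (hint : ∀ r, IntervalIntegrable (fun x => m x / x) volume 0 r)
    (hN : ∀ r, R₀ ≤ r → |(∫ x in (0:ℝ)..r, m x / x) - A * r ^ d / d| ≤ C * r ^ (d - δ))
    (hm : MonotoneOn m (Icc t r)) (hmr : 0 ≤ m r) (hA : 0 ≤ A) (hC : 0 ≤ C) (hd : 1 ≤ d)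
    (hδd : δ ≤ d) (ht : 0 < t) (htR : R₀ ≤ t) (htr : t < r) :
    A * r ^ d - m r ≤ A * d * r ^ (d - 1) * (r - t) + 2 * C * r ^ (d - δ) * (r / (r - t)) := by
  have hrt : 0 < r - t := sub_pos.2 htr
  have hinc := mul_le_mul_of_nonneg_left (rpow_sub_rpow_le_mul hd ht.le htr.le) hA
  have htt : t ^ (d - 1) * t = t ^ d := by
    rw [Real.rpow_sub_one ht.ne']
    field_simp
  have hwindow : A * t ^ (d - 1) * (r - t) - 2 * C * r ^ (d - δ) ≤ m r * ((r - t) / t) := by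
    have hmean : A * t ^ (d - 1) * (r - t) ≤ A * (r ^ d - t ^ d) / d := by
      rw [le_div_iff₀ (by linarith)]
      linarith [mul_le_mul_of_nonneg_left (mul_le_rpow_sub_rpow hd ht.le htr.le) hA]
    linarith [hm.integral_div_le_mul_sub_div ht htr.le hmr,
      (abs_le.1 (abs_integral_div_sub_le hint hN hC hδd ht.le htR htr.le)).1]
  have hmr_ge : A * t ^ d - 2 * C * r ^ (d - δ) * (t / (r - t)) ≤ m r :=
    calc A * t ^ d - 2 * C * r ^ (d - δ) * (t / (r - t))
        = A * (t ^ (d - 1) * t) - 2 * C * r ^ (d - δ) * (t / (r - t)) := by rw [htt]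
      _ = (A * t ^ (d - 1) * (r - t) - 2 * C * r ^ (d - δ)) * (t / (r - t)) := by field_simp
      _ ≤ m r * ((r - t) / t) * (t / (r - t)) := by gcongr
      _ = m r := by field_simp
  have ht_le : 2 * C * r ^ (d - δ) * (t / (r - t)) ≤ 2 * C * r ^ (d - δ) * (r / (r - t)) := by
    have := Real.rpow_nonneg (ht.trans htr).le (d - δ)
    gcongr
  linarith

lemma abs_sub_rpow_le_of_integral
    (hint : ∀ r, IntervalIntegrable (fun x => m x / x) volume 0 r)
    (hN : ∀ r, R₀ ≤ r → |(∫ x in (0:ℝ)..r, m x / x) - A * r ^ d / d| ≤ C * r ^ (d - δ))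
    (hm : MonotoneOn m (Ici 0)) (hm₀ : 0 ≤ m 0) (hA : 0 ≤ A) (hC : 0 ≤ C) (hd : 1 ≤ d)
    (hδ : 0 ≤ δ) (hδd : δ ≤ d) (hα : 0 < α) (hαr : 2 * α ≤ r) (hrR : 2 * R₀ ≤ r) :
    |m r - A * r ^ d| ≤
      2 ^ d * (A * d * (r ^ (d - 1) * α) + 4 * C * (r ^ (d - δ) * (r / α))) := by
  have hr : 0 < r := by linarith
  have hmr : 0 ≤ m r := hm₀.trans (hm self_mem_Ici hr.le hr.le)
  have hupper := sub_rpow_le_of_integral hint hN (s := r + α)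
    (hm.mono fun x hx => hr.le.trans hx.1) hmr hA hC hd hδd hr (by linarith) (by linarith)
  have hlower := rpow_sub_le_of_integral hint hN (t := r - α)
    (hm.mono fun x hx => (by linarith : 0 ≤ r - α).trans hx.1) hmr hA hC hd hδd (by linarith)
    (by linarith) (by linarith)
  rw [add_sub_cancel_left] at hupper
  rw [sub_sub_cancel] at hlower
  have hs₁ : (r + α) ^ (d - 1) ≤ 2 ^ d * r ^ (d - 1) :=
    rpow_le_two_rpow_mul_rpow (by positivity) (by linarith) (by linarith) (by linarith)
  have hs₂ : (r + α) ^ (d - δ) ≤ 2 ^ d * r ^ (d - δ) :=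
    rpow_le_two_rpow_mul_rpow (by positivity) (by linarith) (by linarith) (by linarith)
  have hs₃ : (r + α) / α ≤ 2 * (r / α) := by
    rw [mul_div_assoc']
    gcongr
    linarith
  have hwidth : 0 ≤ A * d * (r ^ (d - 1) * α) := by
    have := mul_nonneg hA (by linarith : (0 : ℝ) ≤ d)
    positivity
  have hamplify : 0 ≤ C * (r ^ (d - δ) * (r / α)) := by positivity
  have h2d : 1 ≤ (2 : ℝ) ^ d := Real.one_le_rpow one_le_two (by linarith)
  have hK := le_mul_of_one_le_left (by positivity : 0 ≤ A * d * (r ^ (d - 1) * α) +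
    4 * C * (r ^ (d - δ) * (r / α))) h2d
  rw [abs_le]
  constructor
  · linarith
  · calc m r - A * r ^ d
        ≤ A * d * (r + α) ^ (d - 1) * α + 2 * C * (r + α) ^ (d - δ) * ((r + α) / α) := hupper
      _ ≤ A * d * (2 ^ d * r ^ (d - 1)) * α + 2 * C * (2 ^ d * r ^ (d - δ)) * (2 * (r / α)) := by
        gcongr
      _ = 2 ^ d * (A * d * (r ^ (d - 1) * α) + 4 * C * (r ^ (d - δ) * (r / α))) := by ring

lemma isBigO_sub_rpow_of_integral
    (hint : ∀ r, IntervalIntegrable (fun x => m x / x) volume 0 r)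
    (hN : ∀ r, R₀ ≤ r → |(∫ x in (0:ℝ)..r, m x / x) - A * r ^ d / d| ≤ C * r ^ (d - δ))
    (hm : MonotoneOn m (Ici 0)) (hm₀ : 0 ≤ m 0) (hA : 0 ≤ A) (hC : 0 ≤ C) (hd : 1 ≤ d)
    (hδ : 0 < δ) (hδd : δ ≤ d) :
    (fun r => m r - A * r ^ d) =O[atTop] fun r => r ^ (d - δ / 2) := by
  refine Asymptotics.IsBigO.of_bound (2 ^ d * (A * d + 4 * C)) ?_
  filter_upwards [eventually_gt_atTop 0, eventually_ge_atTop (2 * R₀),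
    (tendsto_rpow_atTop (half_pos hδ)).eventually_ge_atTop 2] with r hr hrR hr₂
  set α := r ^ (1 - δ / 2)
  have hα : 0 < α := by positivity
  have hαr : α * r ^ (δ / 2) = r := by rw [← Real.rpow_add hr]; norm_num
  have hwidth : r ^ (d - 1) * α = r ^ (d - δ / 2) := by rw [← Real.rpow_add hr]; ring_nf
  have hrα : r / α = r ^ (δ / 2) := by rw [div_eq_iff hα.ne', mul_comm, hαr]
  have hamplify : r ^ (d - δ) * (r / α) = r ^ (d - δ / 2) := by
    rw [hrα, ← Real.rpow_add hr]; ring_nf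
  have hbound := abs_sub_rpow_le_of_integral hint hN hm hm₀ hA hC hd hδ.le hδd hα
    (by nlinarith) hrR
  rw [hwidth, hamplify] at hbound
  rw [Real.norm_eq_abs, Real.norm_of_nonneg (by positivity)]
  linarith

end IntegratedCounting

theorem integrated_counting_to_counting_general
    (n : ℝ → ℝ)
    (hmono : MonotoneOn n (Set.Ici 0))
    (hint : ∀ r : ℝ, IntervalIntegrable (fun t => (n t - n 0) / t) volume 0 r)
    (A d δ : ℝ) (hA : 0 < A) (hd : 1 ≤ d) (hδ : 0 < δ) (hδd : δ < d)
    (C R0 : ℝ) (hC : 0 < C)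
    (hO : ∀ r : ℝ, R0 ≤ r →
      |(∫ t in (0:ℝ)..r, (n t - n 0) / t) - A * r ^ d / d| ≤ C * r ^ (d - δ)) :
    ∃ C' R1 : ℝ, 0 < C' ∧ 0 < R1 ∧ ∀ r : ℝ, R1 ≤ r →
      |n r - A * r ^ d| ≤ C' * r ^ (d - δ / 2) := by
  have hm : MonotoneOn (fun t => n t - n 0) (Ici 0) := fun x hx y hy hxy =>
    sub_le_sub_right (hmono hx hy hxy) _
  have hbig : (fun r => n r - A * r ^ d) =O[atTop] fun r => r ^ (d - δ / 2) := by
    have := (isBigO_sub_rpow_of_integral hint hO hm (sub_self _).ge hA.le hC.le hd hδ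
      hδd.le).add (isBigO_const_rpow_atTop (n 0) (by linarith))
    simpa only [sub_add_cancel, sub_right_comm] using this
  obtain ⟨C', hC', hbound⟩ := hbig.exists_pos
  obtain ⟨R, hR⟩ := eventually_atTop.1 (hbound.bound.and (eventually_ge_atTop 0))
  refine ⟨C', max R 1, hC', by positivity, fun r hr => ?_⟩
  obtain ⟨hr_bound, hr₀⟩ := hR r (le_of_max_le_left hr)
  rwa [Real.norm_eq_abs, Real.norm_of_nonneg (Real.rpow_nonneg hr₀ _)] at hr_bound

/-- If `N(r) = ∫₀^r (n(t)-n(0))/t dt = A r^d / d + O(r^(d-δ))` for a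
nondecreasing nonnegative `n`, then `n(r) = A r^d + O(r^(d-δ/2))`. -/
theorem integrated_counting_to_counting
    (n : ℝ → ℝ) (hpos : ∀ t, 0 ≤ t → 0 ≤ n t)
    (hmono : MonotoneOn n (Set.Ici 0))
    (hint : ∀ r : ℝ, IntervalIntegrable (fun t => (n t - n 0) / t) volume 0 r)
    (A d δ : ℝ) (hA : 0 < A) (hd : 1 ≤ d) (hδ : 0 < δ) (hδd : δ < d)
    (C R0 : ℝ) (hC : 0 < C) (hR0 : 0 < R0)
    (hO : ∀ r : ℝ, R0 ≤ r →
      |(∫ t in (0:ℝ)..r, (n t - n 0) / t) - A * r ^ d / d| ≤ C * r ^ (d - δ)) :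
    ∃ C' R1 : ℝ, 0 < C' ∧ 0 < R1 ∧ ∀ r : ℝ, R1 ≤ r →
      |n r - A * r ^ d| ≤ C' * r ^ (d - δ / 2) :=
  integrated_counting_to_counting_general n hmono hint A d δ hA hd hδ hδd C R0 hC hO
end

section
/- Let $\rho(z) = \log\frac{1+\sqrt{1-z^2}}{z} - \sqrt{1-z^2}$ for real $z \in (0,1)$. Then $|\rho(z)| \sim \frac{2\sqrt{2}}{3}|1-z|^{3/2}$ as $z \to 1^-$; that is, $\lim_{z \to 1^-} \frac{\rho(z)}{(1-z)^{3/2}} = \frac{2\sqrt{2}}{3}$. -/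
open Set Filter

/-!
By L'Hôpital's rule at `z = 1⁻`: both `ρ` and `(1 - z)^(3/2)` vanish there, and the quotient of
their derivatives, `ρ'(z) = -√(1 - z²)/z` and `-(3/2)√(1 - z)`, equals `(2/3)√(1 + z)/z`,
which tends to `2√2/3`.
-/

/-- The phase function `ρ(z) = log((1 + √(1-z²))/z) - √(1-z²)` on the real interval. -/
noncomputable def rhoReal (z : ℝ) : ℝ :=
  Real.log ((1 + Real.sqrt (1 - z ^ 2)) / z) - Real.sqrt (1 - z ^ 2)

open Topology

theorem hasDerivAt_rhoReal {z : ℝ} (hz : z ∈ Ioo (0 : ℝ) 1) :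
    HasDerivAt rhoReal (-√(1 - z ^ 2) / z) z := by
  obtain ⟨hz0, hz1⟩ := hz
  have hpos : 0 < 1 - z ^ 2 := by nlinarith
  have hsplit : rhoReal =ᶠ[𝓝 z]
      fun w => Real.log (1 + √(1 - w ^ 2)) - Real.log w - √(1 - w ^ 2) := by
    filter_upwards [Ioi_mem_nhds hz0] with w hw
    rw [rhoReal, Real.log_div (by positivity) (ne_of_gt hw)]
  have hsqrt : HasDerivAt (fun w : ℝ => √(1 - w ^ 2)) (-(2 * z) / (2 * √(1 - z ^ 2))) z := by
    refine HasDerivAt.sqrt ?_ hpos.ne'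
    simpa using (hasDerivAt_pow 2 z).const_sub 1
  have hderiv := (((hsqrt.const_add 1).log (by positivity)).sub (Real.hasDerivAt_log hz0.ne')).sub
    hsqrt
  refine (hderiv.congr_deriv ?_).congr_of_eventuallyEq hsplit
  have hsq : √(1 - z ^ 2) ^ 2 = 1 - z ^ 2 := Real.sq_sqrt hpos.le
  have : 0 < √(1 - z ^ 2) := Real.sqrt_pos.mpr hpos
  field_simp
  linear_combination √(1 - z ^ 2) * hsq

theorem tendsto_rhoReal_nhds_one : Tendsto rhoReal (𝓝 1) (𝓝 0) := by
  have hcont : ContinuousAt rhoReal 1 := by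
    unfold rhoReal
    fun_prop (disch := norm_num)
  simpa [rhoReal] using hcont.tendsto

theorem tendsto_one_sub_rpow_nhds_one {p : ℝ} (hp : 0 < p) :
    Tendsto (fun z : ℝ => (1 - z) ^ p) (𝓝 1) (𝓝 0) := by
  have hcont : ContinuousAt (fun z : ℝ => (1 - z) ^ p) 1 := by
    fun_prop (disch := exact Or.inr hp.le)
  simpa [Real.zero_rpow hp.ne'] using hcont.tendsto

theorem hasDerivAt_one_sub_rpow {p : ℝ} (hp : 1 ≤ p) (z : ℝ) :
    HasDerivAt (fun z : ℝ => (1 - z) ^ p) (-(p * (1 - z) ^ (p - 1))) z := by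
  have h := (Real.hasDerivAt_rpow_const (x := 1 - z) (Or.inr hp)).comp z
    ((hasDerivAt_id z).const_sub 1)
  simpa [Function.comp_def] using h

theorem rhoReal_deriv_div_eq {z : ℝ} (hz : z ∈ Ioo (0 : ℝ) 1) :
    -√(1 - z ^ 2) / z / -((3 / 2 : ℝ) * (1 - z) ^ ((3 : ℝ) / 2 - 1)) = 2 / 3 * √(1 + z) / z := by
  obtain ⟨hz0, hz1⟩ := hz
  have hsub : 0 < 1 - z := by linarith
  have hfactor : √(1 - z ^ 2) = √(1 - z) * √(1 + z) := by
    rw [← Real.sqrt_mul hsub.le]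
    ring_nf
  have hhalf : (1 - z) ^ ((3 : ℝ) / 2 - 1) = √(1 - z) := by
    rw [Real.sqrt_eq_rpow]
    norm_num
  have : 0 < √(1 - z) := Real.sqrt_pos.mpr hsub
  rw [hfactor, hhalf]
  field_simp

/-- `ρ(z) / (1-z)^(3/2) → 2√2/3` as `z → 1⁻`. -/
theorem rhoReal_turning_point :
    Tendsto (fun z : ℝ => rhoReal z / (1 - z) ^ ((3:ℝ)/2))
      (nhdsWithin 1 (Iio 1)) (nhds (2 * Real.sqrt 2 / 3)) := by
  have hIoo : Ioo (0 : ℝ) 1 ∈ 𝓝[<] (1 : ℝ) := Ioo_mem_nhdsLT (by norm_num)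
  have hlim : Tendsto (fun z : ℝ => 2 / 3 * √(1 + z) / z) (𝓝[<] 1) (𝓝 (2 * √2 / 3)) := by
    have hcont : ContinuousAt (fun z : ℝ => 2 / 3 * √(1 + z) / z) 1 := by
      fun_prop (disch := norm_num)
    convert hcont.tendsto.mono_left nhdsWithin_le_nhds using 2
    norm_num
    ring
  refine HasDerivAt.lhopital_zero_nhdsLT (f' := fun z => -√(1 - z ^ 2) / z)
    (g' := fun z => -((3 / 2 : ℝ) * (1 - z) ^ ((3 : ℝ) / 2 - 1))) ?_
    (Eventually.of_forall (hasDerivAt_one_sub_rpow (by norm_num))) ?_ ?_ ?_ ?_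
  · filter_upwards [hIoo] with z hz using hasDerivAt_rhoReal hz
  · filter_upwards [hIoo] with z hz
    have : 0 < 1 - z := by linarith [hz.2]
    simp only [ne_eq, neg_eq_zero, mul_eq_zero, not_or]
    exact ⟨by norm_num, (Real.rpow_pos_of_pos this _).ne'⟩
  · exact tendsto_rhoReal_nhds_one.mono_left nhdsWithin_le_nhds
  · exact (tendsto_one_sub_rpow_nhds_one (by norm_num)).mono_left nhdsWithin_le_nhds
  · exact hlim.congr' (eventually_of_mem hIoo fun z hz => (rhoReal_deriv_div_eq hz).symm)
end
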